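/- arXiv:1705.09518 — 5 statements merged into one kernel-verified Lean document; each statement's English description precedes it below -/
import Mathlib

section
/- Let L be an n×n real symmetric matrix with eigenvalues λ_1 ≤ … ≤ λ_n and a corresponding orthonormal basis of eigenvectors u_1, …, u_n of ℝ^n. Let f ∈ ℝ^n be nonzero, let ω(f) = max{λ_i : u_iᵀ f ≠ 0} be its bandwidth, and let r = #{i : λ_i ≤ ω(f)}. Then f lies in span{u_1, …, u_r}, and there exists a subset T ⊆ {1, …, n} with |T| = r such that every g ∈ span{u_1, …, u_r} satisfying g_j = f_j for all j ∈ T is equal to f (i.e., f is perfectly recovered from its values on T). -/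
open Matrix

/-- Sampling theorem for bandlimited graph signals: if `f` has bandwidth `ω(f)` (the largest
eigenvalue whose eigenvector is not orthogonal to `f`) and `r = #{i : λ_i ≤ ω(f)}`, then `f`
lies in the span of the first `r` eigenvectors, and there is a set `T` of `r` coordinates such
that `f` is the unique signal in that span agreeing with `f` on `T`. -/
theorem stmt0 (n : ℕ) (hn : 0 < n) (L : Matrix (Fin n) (Fin n) ℝ) (hL : L.IsSymm)
    (lam : Fin n → ℝ) (hmono : Monotone lam)
    (u : Fin n → (Fin n → ℝ))
    (horth : ∀ i j, u i ⬝ᵥ u j = if i = j then (1 : ℝ) else 0)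
    (heig : ∀ i, L.mulVec (u i) = lam i • u i)
    (f : Fin n → ℝ) (hf : f ≠ 0)
    (ω : ℝ) (hω : IsGreatest {t | ∃ i, u i ⬝ᵥ f ≠ 0 ∧ lam i = t} ω)
    (r : ℕ) (hr : r = (Finset.univ.filter fun i => lam i ≤ ω).card) :
    f ∈ Submodule.span ℝ (u '' {i | (i : ℕ) < r}) ∧
    ∃ T : Finset (Fin n), T.card = r ∧
      ∀ g ∈ Submodule.span ℝ (u '' {i | (i : ℕ) < r}),
        (∀ j ∈ T, g j = f j) → g = f := by
  classical
  have hds : ∀ (v : Fin n → ℝ) (w : Fin n → (Fin n → ℝ)),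
      v ⬝ᵥ (∑ i, w i) = ∑ i, v ⬝ᵥ w i := by
    intro v w
    simp only [dotProduct, Finset.sum_apply, Finset.mul_sum]
    exact Finset.sum_comm
  have hne : Nonempty (Fin n) := ⟨⟨0, hn⟩⟩
  -- orthonormal families are linearly independent
  have hindep : LinearIndependent ℝ u := by
    rw [Fintype.linearIndependent_iff]
    intro c hc j
    have h1 := congrArg (fun v => u j ⬝ᵥ v) hc
    simpa [hds, dotProduct_smul, horth, Finset.sum_ite_eq'] using h1
  have hspan_top : Submodule.span ℝ (Set.range u) = ⊤ := by
    apply hindep.span_eq_top_of_card_eq_finrank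
    simp
  -- the set {i | i < r} coincides with {i | lam i ≤ ω}
  have hiff : ∀ i : Fin n, (i : ℕ) < r ↔ lam i ≤ ω := by
    intro i
    constructor
    · intro hlt
      by_contra hgt
      push_neg at hgt
      have hsub : (Finset.univ.filter fun j => lam j ≤ ω) ⊆ Finset.Iio i := by
        intro j hj
        rw [Finset.mem_filter] at hj
        rw [Finset.mem_Iio]
        by_contra hij
        push_neg at hij
        exact absurd (hmono hij) (not_le.mpr (lt_of_le_of_lt hj.2 hgt))
      have := Finset.card_le_card hsub
      rw [← hr, Fin.card_Iio] at this
      omega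
    · intro hle
      have hsub : Finset.Iic i ⊆ (Finset.univ.filter fun j => lam j ≤ ω) := by
        intro j hj
        rw [Finset.mem_Iic] at hj
        exact Finset.mem_filter.mpr ⟨Finset.mem_univ _, le_trans (hmono hj) hle⟩
      have := Finset.card_le_card hsub
      rw [← hr, Fin.card_Iic] at this
      omega
  -- coefficients above the bandwidth vanish
  have hcoef : ∀ i : Fin n, ¬ ((i : ℕ) < r) → u i ⬝ᵥ f = 0 := by
    intro i hi
    by_contra hne
    exact hi ((hiff i).mpr (hω.2 ⟨i, hne, rfl⟩))
  -- f is the sum of its Fourier coefficients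
  have hrepr : f = ∑ i, (u i ⬝ᵥ f) • u i := by
    set h : Fin n → ℝ := f - ∑ i, (u i ⬝ᵥ f) • u i with hh
    have hdot : ∀ j, u j ⬝ᵥ h = 0 := by
      intro j
      simp [hh, dotProduct_sub, hds, dotProduct_smul, horth, Finset.sum_ite_eq']
    let φ : (Fin n → ℝ) →ₗ[ℝ] ℝ :=
      { toFun := fun v => v ⬝ᵥ h
        map_add' := fun a b => add_dotProduct a b h
        map_smul' := fun c a => smul_dotProduct c a h }
    have hker : Submodule.span ℝ (Set.range u) ≤ LinearMap.ker φ := by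
      rw [Submodule.span_le]
      rintro _ ⟨j, rfl⟩
      exact hdot j
    rw [hspan_top] at hker
    have hφh : h ⬝ᵥ h = 0 := hker (Submodule.mem_top (x := h))
    have hzero : h = 0 := by
      rwa [dotProduct_self_eq_zero] at hφh
    rw [hh, sub_eq_zero] at hzero
    exact hzero
  have hfmem : f ∈ Submodule.span ℝ (u '' {i | (i : ℕ) < r}) := by
    rw [hrepr]
    apply Submodule.sum_mem
    intro i _
    by_cases hi : (i : ℕ) < r
    · exact Submodule.smul_mem _ _ (Submodule.subset_span ⟨i, hi, rfl⟩)
    · rw [hcoef i hi]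
      simp
  refine ⟨hfmem, ?_⟩
  set V := Submodule.span ℝ (u '' {i | (i : ℕ) < r}) with hV
  have hrn : r ≤ n := by
    rw [hr]
    simpa using Finset.card_filter_le Finset.univ fun i => lam i ≤ ω
  -- finrank V = r
  have hcardsub : Fintype.card {i : Fin n // (i : ℕ) < r} = r := by
    rw [Fintype.card_subtype]
    have : (Finset.univ.filter fun i : Fin n => (i : ℕ) < r)
        = (Finset.univ.filter fun i => lam i ≤ ω) := by
      ext i; simp [hiff i]
    rw [this, ← hr]
  have hVrank : Module.finrank ℝ V = r := by
    have h1 : LinearIndependent ℝ (fun i : {i : Fin n // (i : ℕ) < r} => u i) :=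
      hindep.comp _ Subtype.val_injective
    have h2 : Set.range (fun i : {i : Fin n // (i : ℕ) < r} => u i)
        = u '' {i | (i : ℕ) < r} := by
      exact (Set.image_eq_range u _).symm
    rw [hV, ← h2, finrank_span_eq_card h1, hcardsub]
  -- coordinate functionals on V
  let ε : Fin n → Module.Dual ℝ V := fun j => (LinearMap.proj j).comp V.subtype
  have hspanε : Submodule.span ℝ (Set.range ε) = ⊤ := by
    have hco : (Submodule.span ℝ (Set.range ε)).dualCoannihilator = ⊥ := by
      rw [Submodule.eq_bot_iff]
      intro v hv
      rw [Submodule.mem_dualCoannihilator] at hv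
      have hval : (v : Fin n → ℝ) = 0 := by
        funext j
        exact hv (ε j) (Submodule.subset_span ⟨j, rfl⟩)
      exact Subtype.ext hval
    have heq := Subspace.finrank_add_finrank_dualCoannihilator_eq
      (Submodule.span ℝ (Set.range ε))
    rw [hco] at heq
    simp only [finrank_bot, add_zero] at heq
    apply Submodule.eq_top_of_finrank_eq
    rw [heq, Subspace.dual_finrank_eq]
  obtain ⟨b, hbsub, hbspan, hbind⟩ := exists_linearIndependent ℝ (Set.range ε)
  have hbfin : b.Finite := (Set.finite_range ε).subset hbsub
  have : Fintype b := hbfin.fintype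
  have hbcard : hbfin.toFinset.card = r := by
    have h1 := finrank_span_set_eq_card hbind
    rw [hbspan, hspanε, finrank_top, Subspace.dual_finrank_eq, hVrank] at h1
    rw [Set.Finite.card_toFinset hbfin, h1, Set.toFinset_card]
  -- choose an index for each functional in b
  let pick : Module.Dual ℝ V → Fin n := fun φ =>
    if h : ∃ j, ε j = φ then h.choose else ⟨0, hn⟩
  have hpick : ∀ φ ∈ b, ε (pick φ) = φ := by
    intro φ hφ
    obtain ⟨j, hj⟩ := hbsub hφ
    have hex : ∃ j, ε j = φ := ⟨j, hj⟩
    simp only [pick, dif_pos hex]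
    exact hex.choose_spec
  refine ⟨hbfin.toFinset.image pick, ?_, ?_⟩
  · rw [Finset.card_image_of_injOn, hbcard]
    intro φ hφ ψ hψ hpq
    rw [Finset.mem_coe, Set.Finite.mem_toFinset] at hφ hψ
    rw [← hpick φ hφ, ← hpick ψ hψ, hpq]
  · intro g hg hagree
    set v : V := ⟨g - f, Submodule.sub_mem V hg hfmem⟩ with hv
    have hvb : ∀ φ ∈ b, φ v = 0 := by
      intro φ hφ
      have hjT : pick φ ∈ hbfin.toFinset.image pick :=
        Finset.mem_image_of_mem pick (hbfin.mem_toFinset.mpr hφ)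
      have := hagree (pick φ) hjT
      rw [← hpick φ hφ]
      show (v : Fin n → ℝ) (pick φ) = 0
      simp [hv, this]
    have hall : ∀ φ : Module.Dual ℝ V, φ v = 0 := by
      intro φ
      have hφmem : φ ∈ Submodule.span ℝ b := by rw [hbspan, hspanε]; trivial
      have hker : Submodule.span ℝ b ≤ LinearMap.ker (Module.Dual.eval ℝ V v) := by
        rw [Submodule.span_le]
        intro ψ hψ
        exact hvb ψ hψ
      exact hker hφmem
    have hv0 : v = 0 := (Module.forall_dual_apply_eq_zero_iff ℝ v).mp hall
    have : g - f = 0 := congrArg Subtype.val hv0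
    rw [sub_eq_zero] at this
    exact this
end

section
/- Let L be an n×n real symmetric positive semidefinite matrix and let f ∈ ℝ^n be nonzero. Then the sequence of bandwidth estimates converges to the bandwidth: lim_{m→∞} ((fᵀ L^m f)/(fᵀ f))^{1/m} = ω(f). -/
open Matrix Filter

lemma const_rpow_one_div_tendsto {c : ℝ} (hc : 0 < c) :
    Tendsto (fun m : ℕ => c ^ (1 / (m : ℝ))) atTop (nhds 1) := by
  have h0 : Tendsto (fun m : ℕ => 1 / (m : ℝ)) atTop (nhds 0) :=
    tendsto_one_div_atTop_nhds_zero_nat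
  have hcont : ContinuousAt (fun x : ℝ => c ^ x) 0 :=
    Real.continuousAt_const_rpow (ne_of_gt hc)
  have := hcont.tendsto.comp h0
  simpa [Function.comp_def] using this

/-- Convergence of the bandwidth estimates to the bandwidth: for a PSD symmetric `L` and
nonzero `f`, `lim_{m→∞} ((fᵀ L^m f)/(fᵀ f))^{1/m} = ω(f) = max{λ_i : u_iᵀ f ≠ 0}`. -/
theorem stmt2 (n : ℕ) (L : Matrix (Fin n) (Fin n) ℝ) (hL : L.PosSemidef)
    (lam : Fin n → ℝ) (hmono : Monotone lam)
    (u : Fin n → (Fin n → ℝ))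
    (horth : ∀ i j, u i ⬝ᵥ u j = if i = j then (1 : ℝ) else 0)
    (heig : ∀ i, L.mulVec (u i) = lam i • u i)
    (f : Fin n → ℝ) (hf : f ≠ 0)
    (ω : ℝ) (hω : IsGreatest {t | ∃ i, u i ⬝ᵥ f ≠ 0 ∧ lam i = t} ω) :
    Tendsto (fun m : ℕ => (f ⬝ᵥ (L ^ m).mulVec f / (f ⬝ᵥ f)) ^ (1 / (m : ℝ)))
      atTop (nhds ω) := by
  classical
  set U : Matrix (Fin n) (Fin n) ℝ := Matrix.of u with hUdef
  have hUUT : U * Uᵀ = 1 := by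
    ext i j
    simpa [hUdef, Matrix.mul_apply, Matrix.one_apply, dotProduct] using horth i j
  have hUTU : Uᵀ * U = 1 := mul_eq_one_comm.mp hUUT
  set D : Matrix (Fin n) (Fin n) ℝ := Matrix.diagonal lam with hDdef
  have hLU : L * Uᵀ = Uᵀ * D := by
    ext k i
    have h1 : L.mulVec (u i) k = lam i * u i k := by
      rw [heig i]; rfl
    have h2 : (L * Uᵀ) k i = L.mulVec (u i) k := by
      simp [Matrix.mul_apply, Matrix.mulVec, dotProduct, hUdef]
    rw [h2, h1, hDdef, Matrix.mul_diagonal]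
    simp [hUdef, mul_comm]
  have hLdecomp : ∀ m : ℕ, L ^ m = Uᵀ * D ^ m * U := by
    intro m
    induction m with
    | zero => simpa using hUTU.symm
    | succ m ih =>
      have hUL : U * L = D * U := by
        have : (L * Uᵀ)ᵀ = (Uᵀ * D)ᵀ := by rw [hLU]
        have hsym : Lᵀ = L := hL.1
        have hDsym : Dᵀ = D := by simp [hDdef]
        simpa [Matrix.transpose_mul, hsym, hDsym] using this
      rw [pow_succ, ih, Matrix.mul_assoc (Uᵀ * D ^ m) U L, hUL,
        ← Matrix.mul_assoc (Uᵀ * D ^ m) D U, Matrix.mul_assoc Uᵀ (D ^ m) D,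
        ← pow_succ]
  set c : Fin n → ℝ := U.mulVec f with hcdef
  have hci : ∀ i, c i = u i ⬝ᵥ f := by
    intro i; simp [hcdef, Matrix.mulVec, hUdef, dotProduct]
  have key : ∀ m : ℕ, f ⬝ᵥ (L ^ m).mulVec f = ∑ i, (c i) ^ 2 * lam i ^ m := by
    intro m
    rw [hLdecomp m]
    have : (Uᵀ * D ^ m * U) *ᵥ f = Uᵀ *ᵥ (D ^ m *ᵥ (U *ᵥ f)) := by
      rw [Matrix.mulVec_mulVec, Matrix.mulVec_mulVec]
    rw [this, Matrix.dotProduct_mulVec, Matrix.vecMul_transpose, ← hcdef]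
    rw [hDdef, Matrix.diagonal_pow]
    simp only [dotProduct, Matrix.mulVec_diagonal]
    refine Finset.sum_congr rfl fun i _ => by simp [Pi.pow_apply]; ring
  have hF : f ⬝ᵥ f = ∑ i, (c i) ^ 2 := by
    have := key 0
    simpa using this
  have hFpos : 0 < f ⬝ᵥ f := by
    have hnn : (0:ℝ) ≤ f ⬝ᵥ f := by rw [hF]; positivity
    rcases lt_or_eq_of_le hnn with h | h
    · exact h
    · exact absurd (dotProduct_self_eq_zero.mp h.symm) hf
  have hlamnn : ∀ i, 0 ≤ lam i := by
    intro i
    have h1 : u i ⬝ᵥ L.mulVec (u i) = lam i := by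
      rw [heig i]
      have horthi := horth i i
      simp only [dotProduct, if_pos rfl] at horthi ⊢
      have hx : ∀ x, u i x * (lam i • u i) x = lam i * (u i x * u i x) := by
        intro x; rw [Pi.smul_apply, smul_eq_mul]; ring
      simp_rw [hx, ← Finset.mul_sum, horthi]; simp
    have := hL.dotProduct_mulVec_nonneg (u i)
    simpa [h1] using this
  obtain ⟨i₀, hci₀, hlami₀⟩ := hω.1
  have hci₀' : c i₀ ≠ 0 := by rw [hci]; exact hci₀
  have hub : ∀ i, c i ≠ 0 → lam i ≤ ω := by
    intro i hi
    exact hω.2 ⟨i, by rw [← hci]; exact hi, rfl⟩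
  have hωnn : 0 ≤ ω := hlami₀ ▸ hlamnn i₀
  set F := f ⬝ᵥ f with hFdef
  rcases eq_or_lt_of_le hωnn with hω0 | hωpos
  · -- ω = 0 case
    have hzero : ∀ m : ℕ, 1 ≤ m → f ⬝ᵥ (L ^ m).mulVec f = 0 := by
      intro m hm
      rw [key m]
      refine Finset.sum_eq_zero fun i _ => ?_
      by_cases hi : c i = 0
      · simp [hi]
      · have : lam i = 0 := le_antisymm (hω0 ▸ hub i hi) (hlamnn i)
        rw [this, zero_pow (by omega)]; ring
    have heq : ∀ᶠ m : ℕ in atTop, (0 : ℝ) =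
        (f ⬝ᵥ (L ^ m).mulVec f / F) ^ (1 / (m : ℝ)) := by
      filter_upwards [eventually_ge_atTop 1] with m hm
      rw [hzero m hm, zero_div, Real.zero_rpow
        (one_div_ne_zero (Nat.cast_ne_zero.mpr (by omega)))]
    rw [← hω0]
    exact Tendsto.congr' heq tendsto_const_nhds
  · -- ω > 0 case
    have htermnn : ∀ (m : ℕ) (i : Fin n), 0 ≤ (c i) ^ 2 * lam i ^ m := by
      intro m i; exact mul_nonneg (sq_nonneg _) (pow_nonneg (hlamnn i) m)
    have hgnn : ∀ m : ℕ, 0 ≤ ∑ i, (c i) ^ 2 * lam i ^ m := fun m =>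
      Finset.sum_nonneg fun i _ => htermnn m i
    have hlow : ∀ m : ℕ, (c i₀) ^ 2 * ω ^ m ≤ ∑ i, (c i) ^ 2 * lam i ^ m := by
      intro m
      rw [← hlami₀]
      exact Finset.single_le_sum (fun i _ => htermnn m i) (Finset.mem_univ i₀)
    have hhigh : ∀ m : ℕ, ∑ i, (c i) ^ 2 * lam i ^ m ≤ F * ω ^ m := by
      intro m
      rw [hF, Finset.sum_mul]
      refine Finset.sum_le_sum fun i _ => ?_
      by_cases hi : c i = 0
      · simp [hi]
      · exact mul_le_mul_of_nonneg_left
          (pow_le_pow_left₀ (hlamnn i) (hub i hi) m) (by positivity)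
    have hωpow : ∀ m : ℕ, 1 ≤ m → ((ω ^ m : ℝ)) ^ (1 / (m : ℝ)) = ω := by
      intro m hm
      rw [← Real.rpow_natCast ω m, ← Real.rpow_mul hωnn]
      rw [mul_one_div, div_self (Nat.cast_ne_zero.mpr (by omega) : (m:ℝ) ≠ 0)]
      exact Real.rpow_one ω
    have hupper : ∀ᶠ m : ℕ in atTop,
        (f ⬝ᵥ (L ^ m).mulVec f / F) ^ (1 / (m : ℝ)) ≤ ω := by
      filter_upwards [eventually_ge_atTop 1] with m hm
      rw [key m]
      calc ((∑ i, (c i) ^ 2 * lam i ^ m) / F) ^ (1 / (m : ℝ))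
          ≤ (ω ^ m) ^ (1 / (m : ℝ)) := by
            apply Real.rpow_le_rpow (div_nonneg (hgnn m) hFpos.le) _ (by positivity)
            rw [div_le_iff₀ hFpos]
            calc ∑ i, (c i) ^ 2 * lam i ^ m ≤ F * ω ^ m := hhigh m
              _ = ω ^ m * F := by ring
        _ = ω := hωpow m hm
    set a : ℝ := (c i₀) ^ 2 with hadef
    have hapos : 0 < a := by positivity
    have hlower : ∀ᶠ m : ℕ in atTop,
        (a / F) ^ (1 / (m : ℝ)) * ω ≤
          (f ⬝ᵥ (L ^ m).mulVec f / F) ^ (1 / (m : ℝ)) := by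
      filter_upwards [eventually_ge_atTop 1] with m hm
      rw [key m]
      have h1 : (a / F) ^ (1 / (m : ℝ)) * ω = (a / F * ω ^ m) ^ (1 / (m : ℝ)) := by
        rw [Real.mul_rpow (by positivity) (pow_nonneg hωnn m), hωpow m hm]
      rw [h1]
      apply Real.rpow_le_rpow
        (mul_nonneg (by positivity) (pow_nonneg hωnn m)) _ (by positivity)
      rw [div_mul_eq_mul_div, div_le_div_iff_of_pos_right hFpos]
      exact hlow m
    have hltend : Tendsto (fun m : ℕ => (a / F) ^ (1 / (m : ℝ)) * ω) atTop (nhds ω) := by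
      have := (const_rpow_one_div_tendsto (by positivity : (0:ℝ) < a / F)).mul_const ω
      simpa using this
    exact tendsto_of_tendsto_of_tendsto_of_le_of_le' hltend tendsto_const_nhds hlower hupper
end

section
/- Let d ≥ 1 and let p : ℝ^d → ℝ be twice continuously differentiable with operator norm of the Hessian bounded: ‖∇²p(x)‖ ≤ M for all x ∈ ℝ^d. Then for all x, y ∈ ℝ^d, all σ > 0 and all a, b > 0, |∫_{ℝ^d} K_{aσ²}(x, z) K_{bσ²}(z, y) p(z) dz − K_{(a+b)σ²}(x, y) · p((b x + a y)/(a + b))| ≤ K_{(a+b)σ²}(x, y) · (d M / 2) · (ab/(a+b)) σ². -/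
open Real MeasureTheory

/-- The Gaussian kernel `K_s(x, y) = (2πs)^{-d/2} exp(−‖x − y‖²/(2s))` on `ℝ^d`. -/
noncomputable def gaussK (d : ℕ) (s : ℝ) (x y : EuclideanSpace ℝ (Fin d)) : ℝ :=
  (2 * Real.pi * s) ^ (-(d : ℝ) / 2) * Real.exp (-‖x - y‖ ^ 2 / (2 * s))

section Helpers

variable {d : ℕ}

/-! ### One-dimensional Gaussian moment lemmas -/

lemma integrable_sq_mul_exp1 {c : ℝ} (hc : 0 < c) :
    Integrable (fun x : ℝ => x ^ 2 * rexp (-c * x ^ 2)) := by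
  have h := integrable_rpow_mul_exp_neg_mul_sq hc (by norm_num : (-1:ℝ) < 2)
  refine h.congr (Filter.Eventually.of_forall fun t => ?_)
  norm_num [show ((2:ℝ)) = ((2:ℕ):ℝ) by norm_num, Real.rpow_natCast]

lemma integral_sq_mul_exp {c : ℝ} (hc : 0 < c) :
    ∫ x : ℝ, x ^ 2 * rexp (-c * x ^ 2) = √(π / c) / (2 * c) := by
  have h1 : ∫ x : ℝ, x ^ 2 * rexp (-c * x ^ 2)
      = ∫ x : ℝ, (fun t : ℝ => t ^ 2 * rexp (-c * t ^ 2)) |x| := by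
    congr 1 with x
    simp [sq_abs]
  rw [h1, integral_comp_abs (f := fun t : ℝ => t ^ 2 * rexp (-c * t ^ 2))]
  have h2 : ∫ x in Set.Ioi (0:ℝ), x ^ 2 * rexp (-c * x ^ 2)
      = ∫ x in Set.Ioi (0:ℝ), x ^ (2:ℝ) * rexp (-c * x ^ (2:ℝ)) := by
    refine setIntegral_congr_fun measurableSet_Ioi (fun t ht => ?_)
    rw [show ((2:ℝ)) = ((2:ℕ):ℝ) by norm_num, Real.rpow_natCast]
  rw [h2, integral_rpow_mul_exp_neg_mul_rpow (by norm_num) (by norm_num) hc]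
  have h3 : ((2:ℝ) + 1) / 2 = 1/2 + 1 := by norm_num
  rw [h3, Real.Gamma_add_one (by norm_num), Real.Gamma_one_half_eq]
  have h4 : √(π / c) = √π / √c := Real.sqrt_div (le_of_lt pi_pos) c
  have h5 : c ^ (-((2:ℝ) + 1) / 2) = (√c)⁻¹ * c⁻¹ := by
    rw [show (-((2:ℝ)+1)/2) = (-(1/2)) + (-1) by norm_num, Real.rpow_add hc,
      Real.rpow_neg hc.le, Real.rpow_neg_one, ← Real.sqrt_eq_rpow]
  rw [h4, h5]
  have hs : √c ≠ 0 := ne_of_gt (Real.sqrt_pos.mpr hc)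
  field_simp

/-! ### Coordinatewise product structure for the second moment on `ℝ^d` -/

/-- auxiliary coordinate functions -/
noncomputable def gfun (c : ℝ) (i j : Fin d) : ℝ → ℝ :=
  fun t => (if j = i then t ^ 2 else 1) * rexp (-c * t ^ 2)

lemma gfun_integrable {c : ℝ} (hc : 0 < c) (i j : Fin d) : Integrable (gfun c i j) := by
  unfold gfun
  by_cases h : j = i
  · simp only [h, if_pos rfl]
    exact integrable_sq_mul_exp1 hc
  · simp only [if_neg h, one_mul]
    exact integrable_exp_neg_mul_sq hc

lemma pi_integrand_eq {c : ℝ} (i : Fin d) (x : Fin d → ℝ) :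
    (∏ j, gfun c i j (x j)) = x i ^ 2 * rexp (-c * ∑ j, x j ^ 2) := by
  unfold gfun
  rw [Finset.prod_mul_distrib, Finset.prod_ite_eq' Finset.univ i (fun j => x j ^ 2)]
  simp only [Finset.mem_univ, if_pos]
  congr 1
  rw [← Real.exp_sum]
  congr 1
  rw [Finset.mul_sum]

lemma gfun_integral {c : ℝ} (hc : 0 < c) (i j : Fin d) :
    ∫ t : ℝ, gfun c i j t = √(π / c) * (if j = i then (2 * c)⁻¹ else 1) := by
  unfold gfun
  by_cases h : j = i
  · simp only [h, if_true]
    rw [integral_sq_mul_exp hc, div_eq_mul_inv]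
  · simp only [if_neg h, one_mul, mul_one]
    exact integral_gaussian c

lemma pi_sq_integrable {c : ℝ} (hc : 0 < c) :
    Integrable (fun x : Fin d → ℝ => (∑ i, x i ^ 2) * rexp (-c * ∑ j, x j ^ 2)) := by
  have he : (fun x : Fin d → ℝ => (∑ i, x i ^ 2) * rexp (-c * ∑ j, x j ^ 2))
      = fun x => ∑ i, ∏ j, gfun c i j (x j) := by
    funext x
    rw [Finset.sum_mul]
    exact Finset.sum_congr rfl fun i _ => (pi_integrand_eq i x).symm
  rw [he]
  exact integrable_finset_sum _ fun i _ =>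
    Integrable.fintype_prod (f := fun j => gfun c i j) (fun j => gfun_integrable hc i j)

lemma pi_sq_integral {c : ℝ} (hc : 0 < c) :
    ∫ x : Fin d → ℝ, (∑ i, x i ^ 2) * rexp (-c * ∑ j, x j ^ 2)
      = (d : ℝ) / (2 * c) * (π / c) ^ ((d : ℝ) / 2) := by
  have he : (fun x : Fin d → ℝ => (∑ i, x i ^ 2) * rexp (-c * ∑ j, x j ^ 2))
      = fun x => ∑ i, ∏ j, gfun c i j (x j) := by
    funext x
    rw [Finset.sum_mul]
    exact Finset.sum_congr rfl fun i _ => (pi_integrand_eq i x).symm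
  rw [he, integral_finset_sum (μ := volume) _ fun i _ =>
    Integrable.fintype_prod (f := fun j => gfun c i j) (fun j => gfun_integrable hc i j)]
  have key : ∀ i : Fin d, ∫ x : Fin d → ℝ, ∏ j, gfun c i j (x j)
      = √(π / c) ^ d * (2 * c)⁻¹ := by
    intro i
    rw [volume_pi, MeasureTheory.integral_fintype_prod_eq_prod (fun j => gfun c i j)]
    simp_rw [gfun_integral hc i]
    rw [Finset.prod_mul_distrib, Finset.prod_const, Finset.prod_ite_eq' Finset.univ i
      (fun _ => (2 * c)⁻¹)]
    simp
  rw [Finset.sum_congr rfl fun i _ => key i, Finset.sum_const]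
  simp only [Finset.card_univ, Fintype.card_fin, nsmul_eq_mul]
  have hpc : (0:ℝ) ≤ π / c := by positivity
  rw [show √(π / c) ^ d = (π / c) ^ ((d:ℝ)/2) by
    rw [Real.sqrt_eq_rpow, ← Real.rpow_natCast ((π/c) ^ ((1:ℝ)/2)) d, ← Real.rpow_mul hpc]
    congr 1; ring]
  ring

/-! ### Gaussian integrals over `EuclideanSpace` -/

lemma eucl_normsq (v : EuclideanSpace ℝ (Fin d)) : ‖v‖ ^ 2 = ∑ i, v i ^ 2 := by
  rw [EuclideanSpace.norm_eq, Real.sq_sqrt (Finset.sum_nonneg fun i _ => by positivity)]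
  simp [sq_abs]

lemma integrable_rexp_sq {c : ℝ} (hc : 0 < c) :
    Integrable (fun v : EuclideanSpace ℝ (Fin d) => rexp (-c * ‖v‖ ^ 2)) := by
  have h := (GaussianFourier.integrable_cexp_neg_mul_sq_norm_add
    (V := EuclideanSpace ℝ (Fin d)) (b := (c : ℂ)) (by simpa using hc) 0 0).norm
  refine h.congr (Filter.Eventually.of_forall fun v => ?_)
  simp [Complex.norm_exp]
  exact Or.inl (by rw [← Complex.ofReal_pow, Complex.ofReal_re])

lemma integral_rexp_sq {c : ℝ} (hc : 0 < c) :
    ∫ v : EuclideanSpace ℝ (Fin d), rexp (-c * ‖v‖ ^ 2) = (π / c) ^ ((d : ℝ) / 2) := by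
  have h := GaussianFourier.integral_rexp_neg_mul_sq_norm (V := EuclideanSpace ℝ (Fin d)) hc
  simpa [finrank_euclideanSpace_fin] using h

lemma normsq_exp_integral {c : ℝ} (hc : 0 < c) :
    ∫ v : EuclideanSpace ℝ (Fin d), ‖v‖ ^ 2 * rexp (-c * ‖v‖ ^ 2)
      = (d : ℝ) / (2 * c) * (π / c) ^ ((d : ℝ) / 2) := by
  have hmp := (EuclideanSpace.volume_preserving_symm_measurableEquiv_toLp (Fin d)).symm
  rw [← hmp.integral_comp (MeasurableEquiv.measurableEmbedding _)
    (fun v : EuclideanSpace ℝ (Fin d) => ‖v‖ ^ 2 * rexp (-c * ‖v‖ ^ 2)), ← pi_sq_integral hc]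
  refine integral_congr_ae (Filter.Eventually.of_forall fun x => ?_)
  have hn : ‖(MeasurableEquiv.toLp 2 (Fin d → ℝ)).symm.symm x‖ ^ 2 = ∑ i, x i ^ 2 := by
    rw [eucl_normsq]; rfl
  simp only [Function.comp_apply, hn]

lemma normsq_exp_integrable {c : ℝ} (hc : 0 < c) :
    Integrable (fun v : EuclideanSpace ℝ (Fin d) => ‖v‖ ^ 2 * rexp (-c * ‖v‖ ^ 2)) := by
  have hmp := (EuclideanSpace.volume_preserving_symm_measurableEquiv_toLp (Fin d)).symm
  rw [← hmp.integrable_comp_emb (MeasurableEquiv.measurableEmbedding _)]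
  refine (pi_sq_integrable hc).congr (Filter.Eventually.of_forall fun x => ?_)
  have hn : ‖(MeasurableEquiv.toLp 2 (Fin d → ℝ)).symm.symm x‖ ^ 2 = ∑ i, x i ^ 2 := by
    rw [eucl_normsq]; rfl
  simp only [Function.comp_apply, hn]

/-! ### Calculus lemmas -/

variable {p : EuclideanSpace ℝ (Fin d) → ℝ} {M : ℝ}

lemma fderiv_norm_le (hM : ∀ x, ‖iteratedFDeriv ℝ 2 p x‖ ≤ M)
    (z : EuclideanSpace ℝ (Fin d)) : ‖fderiv ℝ (fderiv ℝ p) z‖ ≤ M := by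
  have h0 : ‖fderiv ℝ (fderiv ℝ p) z‖ = ‖iteratedFDeriv ℝ 0 (fderiv ℝ (fderiv ℝ p)) z‖ := by
    rw [norm_iteratedFDeriv_zero]
  rw [h0, norm_iteratedFDeriv_fderiv, norm_iteratedFDeriv_fderiv]
  exact hM z

lemma fderiv_diff (hp : ContDiff ℝ 2 p) : Differentiable ℝ (fderiv ℝ p) := by
  have h2 : ContDiff ℝ ((1 : ℕ∞) + 1) p := by exact_mod_cast hp
  exact ((contDiff_succ_iff_fderiv.mp h2).2.2).differentiable (by simp)

lemma fderiv_lip (hp : ContDiff ℝ 2 p) (hM : ∀ x, ‖iteratedFDeriv ℝ 2 p x‖ ≤ M)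
    (z w : EuclideanSpace ℝ (Fin d)) : ‖fderiv ℝ p z - fderiv ℝ p w‖ ≤ M * ‖z - w‖ :=
  (convex_univ (𝕜 := ℝ)).norm_image_sub_le_of_norm_fderiv_le
    (fun x _ => (fderiv_diff hp x)) (fun x _ => fderiv_norm_le hM x)
    (Set.mem_univ w) (Set.mem_univ z)

lemma taylor_bound (hp : ContDiff ℝ 2 p) (hM : ∀ x, ‖iteratedFDeriv ℝ 2 p x‖ ≤ M)
    (m w : EuclideanSpace ℝ (Fin d)) :
    |p (m + w) - p m - fderiv ℝ p m w| ≤ M / 2 * ‖w‖ ^ 2 := by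
  set φ' : ℝ → ℝ := fun t => fderiv ℝ p (m + t • w) w - fderiv ℝ p m w with hφ'
  have hmw : ∀ t : ℝ, HasDerivAt (fun s : ℝ => m + s • w) w t := fun t => by
    simpa using ((hasDerivAt_id t).smul_const w).const_add m
  have hder : ∀ t : ℝ, HasDerivAt (fun s => p (m + s • w) - s * fderiv ℝ p m w) (φ' t) t := by
    intro t
    have h1 : HasDerivAt (fun s => p (m + s • w)) (fderiv ℝ p (m + t • w) w) t :=
      ((hp.differentiable (by norm_num) (m + t • w)).hasFDerivAt).comp_hasDerivAt t (hmw t)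
    have h3 := h1.sub (((hasDerivAt_id t).mul_const (fderiv ℝ p m w)))
    simp only [id, one_mul] at h3
    exact h3
  have hcont : Continuous φ' := by
    have h1 : Continuous (fderiv ℝ p) := (hp.continuous_fderiv (by norm_num))
    fun_prop
  have hFTC := intervalIntegral.integral_eq_sub_of_hasDerivAt
    (fun t _ => hder t) (hcont.intervalIntegrable 0 1)
  have heq : p (m + w) - p m - fderiv ℝ p m w = ∫ t in (0:ℝ)..1, φ' t := by
    rw [hFTC]; simp; ring
  rw [heq]
  have hbound : ∀ t ∈ Set.Icc (0:ℝ) 1, ‖φ' t‖ ≤ M * ‖w‖ ^ 2 * t := by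
    intro t ht
    have h1 : |φ' t| ≤ ‖fderiv ℝ p (m + t • w) - fderiv ℝ p m‖ * ‖w‖ := by
      have := (fderiv ℝ p (m + t • w) - fderiv ℝ p m).le_opNorm w
      simpa [hφ'] using this
    have h2 : ‖fderiv ℝ p (m + t • w) - fderiv ℝ p m‖ ≤ M * (t * ‖w‖) := by
      have := fderiv_lip hp hM (m + t • w) m
      simpa [norm_smul, abs_of_nonneg ht.1] using this
    calc ‖φ' t‖ ≤ ‖fderiv ℝ p (m + t • w) - fderiv ℝ p m‖ * ‖w‖ := h1
      _ ≤ M * (t * ‖w‖) * ‖w‖ := mul_le_mul_of_nonneg_right h2 (norm_nonneg w)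
      _ = M * ‖w‖ ^ 2 * t := by ring
  calc |∫ t in (0:ℝ)..1, φ' t| ≤ ∫ t in (0:ℝ)..1, |φ' t| :=
        intervalIntegral.abs_integral_le_integral_abs zero_le_one
    _ ≤ ∫ t in (0:ℝ)..1, M * ‖w‖ ^ 2 * t := by
        apply intervalIntegral.integral_mono_on zero_le_one
          (hcont.abs.intervalIntegrable 0 1)
          ((continuous_const.mul continuous_id).intervalIntegrable 0 1)
        intro t ht
        exact hbound t ht
    _ = M / 2 * ‖w‖ ^ 2 := by
        rw [intervalIntegral.integral_const_mul, integral_id]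
        ring

/-! ### Product of two Gaussian kernels -/

lemma gauss_prod {s t : ℝ} (hs : 0 < s) (ht : 0 < t) (x y z : EuclideanSpace ℝ (Fin d)) :
    gaussK d s x z * gaussK d t z y =
      gaussK d (s + t) x y *
        gaussK d (s * t / (s + t)) z ((t / (s + t)) • x + (s / (s + t)) • y) := by
  have hst : 0 < s + t := by linarith
  unfold gaussK
  rw [mul_mul_mul_comm, ← Real.mul_rpow (by positivity) (by positivity), ← Real.exp_add]
  conv_rhs => rw [mul_mul_mul_comm, ← Real.mul_rpow (by positivity) (by positivity),
    ← Real.exp_add]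
  have hbase : 2 * π * s * (2 * π * t) = 2 * π * (s + t) * (2 * π * (s * t / (s + t))) := by
    field_simp
  rw [hbase]
  congr 1
  set m := (t / (s + t)) • x + (s / (s + t)) • y with hm
  set r := x - y with hr
  set w := z - m with hw
  have h1 : x - z = (s / (s + t)) • r - w := by
    rw [hr, hw, hm]
    match_scalars <;> (field_simp; try ring)
  have h2 : z - y = w + (t / (s + t)) • r := by
    rw [hr, hw, hm]
    match_scalars <;> (field_simp; try ring)
  have e1 : ‖x - z‖ ^ 2 = (s / (s+t))^2 * ‖r‖^2 - 2 * (s / (s+t)) * inner ℝ r w + ‖w‖^2 := by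
    rw [h1, @norm_sub_sq_real, norm_smul, real_inner_smul_left]
    rw [Real.norm_eq_abs, abs_of_nonneg (by positivity), mul_pow]
    ring
  have e2 : ‖z - y‖ ^ 2 = ‖w‖^2 + 2 * (t / (s+t)) * inner ℝ r w + (t / (s+t))^2 * ‖r‖^2 := by
    rw [h2, @norm_add_sq_real, norm_smul, real_inner_smul_right]
    rw [Real.norm_eq_abs, abs_of_nonneg (by positivity), mul_pow, real_inner_comm]
    ring
  rw [e1, e2]
  congr 1
  field_simp
  ring

end Helpers

set_option maxHeartbeats 1000000 in
/-- For a `C²` function `p` with Hessian bounded by `M`,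
`|∫ K_{aσ²}(x,z) K_{bσ²}(z,y) p(z) dz − K_{(a+b)σ²}(x,y) p((bx+ay)/(a+b))|
  ≤ K_{(a+b)σ²}(x,y) · (dM/2) · (ab/(a+b)) σ²`. -/
theorem stmt5 (d : ℕ) (hd : 1 ≤ d) (p : EuclideanSpace ℝ (Fin d) → ℝ) (M : ℝ)
    (hp : ContDiff ℝ 2 p) (hM : ∀ x, ‖iteratedFDeriv ℝ 2 p x‖ ≤ M)
    (x y : EuclideanSpace ℝ (Fin d)) (σ : ℝ) (hσ : 0 < σ) (a b : ℝ) (ha : 0 < a) (hb : 0 < b) :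
    |(∫ z, gaussK d (a * σ ^ 2) x z * gaussK d (b * σ ^ 2) z y * p z) -
        gaussK d ((a + b) * σ ^ 2) x y * p ((b / (a + b)) • x + (a / (a + b)) • y)| ≤
      gaussK d ((a + b) * σ ^ 2) x y * ((d : ℝ) * M / 2) * (a * b / (a + b) * σ ^ 2) := by
  have hab : 0 < a + b := by linarith
  have hσ2 : 0 < σ ^ 2 := by positivity
  set s := a * σ ^ 2 with hs_def
  set t := b * σ ^ 2 with ht_def
  have hs : 0 < s := by positivity
  have ht : 0 < t := by positivity
  have hst : 0 < s + t := by linarith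
  set u := a * b / (a + b) * σ ^ 2 with hu_def
  have hu : 0 < u := by positivity
  have hM0 : 0 ≤ M := le_trans (norm_nonneg _) (hM 0)
  have hust : s * t / (s + t) = u := by
    rw [hs_def, ht_def, hu_def]
    field_simp
  have hstab : s + t = (a + b) * σ ^ 2 := by rw [hs_def, ht_def]; ring
  have hcoef1 : t / (s + t) = b / (a + b) := by
    rw [hs_def, ht_def]; rw [show a * σ^2 + b * σ^2 = (a+b) * σ^2 by ring,
      mul_div_mul_right _ _ (ne_of_gt hσ2)]
  have hcoef2 : s / (s + t) = a / (a + b) := by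
    rw [hs_def, ht_def]; rw [show a * σ^2 + b * σ^2 = (a+b) * σ^2 by ring,
      mul_div_mul_right _ _ (ne_of_gt hσ2)]
  set m := (b / (a + b)) • x + (a / (a + b)) • y with hm_def
  set K := gaussK d (s + t) x y with hK_def
  have hKpos : 0 < K := by
    rw [hK_def]; unfold gaussK; positivity
  -- the product identity
  have hprod : ∀ z, gaussK d s x z * gaussK d t z y * p z
      = K * (gaussK d u z m * p z) := by
    intro z
    rw [gauss_prod hs ht x y z, hust, hcoef1, hcoef2, ← hm_def, ← hK_def, mul_assoc]
  -- the centered Gaussian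
  set c := (2 * u)⁻¹ with hc_def
  have hc : 0 < c := by positivity
  set C := (2 * π * u) ^ (-(d:ℝ)/2) with hC_def
  have hC0 : 0 < C := by rw [hC_def]; positivity
  have hgK : ∀ w : EuclideanSpace ℝ (Fin d),
      gaussK d u (m + w) m = C * rexp (-c * ‖w‖ ^ 2) := by
    intro w
    unfold gaussK
    rw [← hC_def, add_sub_cancel_left, hc_def]
    congr 1
    field_simp
  have hπc : π / c = 2 * π * u := by rw [hc_def]; field_simp
  have hCnorm : C * (π / c) ^ ((d:ℝ)/2) = 1 := by
    rw [hπc, hC_def, ← Real.rpow_add (by positivity),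
      show (-(d:ℝ)/2 + (d:ℝ)/2) = 0 by ring, Real.rpow_zero]
  have hdu : (d : ℝ) / (2 * c) = d * u := by
    rw [hc_def]
    field_simp
  -- integrable pieces
  have A0 : Integrable (fun w : EuclideanSpace ℝ (Fin d) => rexp (-c * ‖w‖ ^ 2)) :=
    integrable_rexp_sq hc
  have A2 : Integrable (fun w : EuclideanSpace ℝ (Fin d) => ‖w‖ ^ 2 * rexp (-c * ‖w‖ ^ 2)) :=
    normsq_exp_integrable hc
  set L := fderiv ℝ p m with hL_def
  -- Taylor bound
  have htay : ∀ w : EuclideanSpace ℝ (Fin d),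
      |p (m + w) - p m - L w| ≤ M / 2 * ‖w‖ ^ 2 := fun w => taylor_bound hp hM m w
  -- integrability of the Gaussian times p
  have hp_cont : Continuous p := hp.continuous
  have Ap : Integrable (fun w : EuclideanSpace ℝ (Fin d) => rexp (-c * ‖w‖ ^ 2) * p (m + w)) := by
    have hmeas : AEStronglyMeasurable
        (fun w : EuclideanSpace ℝ (Fin d) => rexp (-c * ‖w‖ ^ 2) * p (m + w)) volume := by
      exact ((Real.continuous_exp.comp (by fun_prop)).mul
        (hp_cont.comp (by fun_prop))).aestronglyMeasurable
    have hptbound : ∀ w : EuclideanSpace ℝ (Fin d),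
        |p (m + w)| ≤ (|p m| + ‖L‖) + (‖L‖ + M / 2) * ‖w‖ ^ 2 := by
      intro w
      have h1 := htay w
      have h2 : |L w| ≤ ‖L‖ * ‖w‖ := L.le_opNorm w
      have h3 : ‖w‖ ≤ 1 + ‖w‖ ^ 2 := by nlinarith [norm_nonneg w, sq_nonneg (‖w‖ - 1)]
      have h4 : |p (m + w)| ≤ |p m| + |L w| + |p (m + w) - p m - L w| := by
        have := abs_add_le (p m + L w) (p (m + w) - p m - L w)
        have h5 := abs_add_le (p m) (L w)
        simp only [show p m + L w + (p (m + w) - p m - L w) = p (m + w) by ring] at this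
        linarith
      have h6 : ‖L‖ * ‖w‖ ≤ ‖L‖ * (1 + ‖w‖ ^ 2) :=
        mul_le_mul_of_nonneg_left h3 (norm_nonneg L)
      nlinarith [norm_nonneg L, sq_nonneg ‖w‖]
    refine Integrable.mono' (g := fun w =>
      ((|p m| + ‖L‖) * rexp (-c * ‖w‖ ^ 2) + (‖L‖ + M / 2) * (‖w‖ ^ 2 * rexp (-c * ‖w‖ ^ 2))))
      ((A0.const_mul _).add (A2.const_mul _)) hmeas
      (Filter.Eventually.of_forall fun w => ?_)
    have he : 0 < rexp (-c * ‖w‖ ^ 2) := Real.exp_pos _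
    have := hptbound w
    rw [Real.norm_eq_abs, abs_mul, abs_of_pos he]
    calc rexp (-c * ‖w‖ ^ 2) * |p (m + w)|
        ≤ rexp (-c * ‖w‖ ^ 2) * ((|p m| + ‖L‖) + (‖L‖ + M / 2) * ‖w‖ ^ 2) := by
          exact mul_le_mul_of_nonneg_left this he.le
      _ = (|p m| + ‖L‖) * rexp (-c * ‖w‖ ^ 2)
            + (‖L‖ + M / 2) * (‖w‖ ^ 2 * rexp (-c * ‖w‖ ^ 2)) := by ring
  -- the linear term integrates to zero
  have A1 : Integrable (fun w : EuclideanSpace ℝ (Fin d) => rexp (-c * ‖w‖ ^ 2) * L w) := by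
    have hmeas : AEStronglyMeasurable
        (fun w : EuclideanSpace ℝ (Fin d) => rexp (-c * ‖w‖ ^ 2) * L w) volume := by
      exact ((Real.continuous_exp.comp (by fun_prop)).mul L.continuous).aestronglyMeasurable
    refine Integrable.mono' (g := fun w =>
      (‖L‖ * rexp (-c * ‖w‖ ^ 2) + ‖L‖ * (‖w‖ ^ 2 * rexp (-c * ‖w‖ ^ 2))))
      ((A0.const_mul _).add (A2.const_mul _)) hmeas
      (Filter.Eventually.of_forall fun w => ?_)
    have he : 0 < rexp (-c * ‖w‖ ^ 2) := Real.exp_pos _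
    have h2 : |L w| ≤ ‖L‖ * ‖w‖ := L.le_opNorm w
    have h3 : ‖w‖ ≤ 1 + ‖w‖ ^ 2 := by nlinarith [norm_nonneg w, sq_nonneg (‖w‖ - 1)]
    rw [Real.norm_eq_abs, abs_mul, abs_of_pos he]
    have : |L w| ≤ ‖L‖ * (1 + ‖w‖ ^ 2) :=
      h2.trans (mul_le_mul_of_nonneg_left h3 (norm_nonneg L))
    calc rexp (-c * ‖w‖ ^ 2) * |L w|
        ≤ rexp (-c * ‖w‖ ^ 2) * (‖L‖ * (1 + ‖w‖ ^ 2)) := mul_le_mul_of_nonneg_left this he.le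
      _ = ‖L‖ * rexp (-c * ‖w‖ ^ 2) + ‖L‖ * (‖w‖ ^ 2 * rexp (-c * ‖w‖ ^ 2)) := by ring
  have I1 : ∫ w : EuclideanSpace ℝ (Fin d), rexp (-c * ‖w‖ ^ 2) * L w = 0 := by
    set g := fun w : EuclideanSpace ℝ (Fin d) => rexp (-c * ‖w‖ ^ 2) * L w with hg
    have hodd : ∀ w, g (-w) = - g w := by
      intro w
      simp [hg, norm_neg]
    have h := integral_neg_eq_self g (volume : Measure (EuclideanSpace ℝ (Fin d)))
    rw [show (fun w => g (-w)) = fun w => - g w from funext hodd] at h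
    rw [integral_neg] at h
    linarith
  -- value of the centered integral
  set J := ∫ w : EuclideanSpace ℝ (Fin d), rexp (-c * ‖w‖ ^ 2) * p (m + w) with hJ_def
  have hsplit : (fun w : EuclideanSpace ℝ (Fin d) =>
        rexp (-c * ‖w‖ ^ 2) * (p (m + w) - p m - L w))
      = fun w => rexp (-c * ‖w‖ ^ 2) * p (m + w) - p m * rexp (-c * ‖w‖ ^ 2)
          - rexp (-c * ‖w‖ ^ 2) * L w := by
    funext w; ring
  have hIsplit : ∫ w : EuclideanSpace ℝ (Fin d), rexp (-c * ‖w‖ ^ 2) * (p (m + w) - p m - L w)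
      = J - p m * (π / c) ^ ((d:ℝ)/2) := by
    have AB : Integrable (fun w : EuclideanSpace ℝ (Fin d) =>
        rexp (-c * ‖w‖ ^ 2) * p (m + w) - p m * rexp (-c * ‖w‖ ^ 2)) :=
      Ap.sub (A0.const_mul (p m))
    rw [hsplit]
    rw [integral_sub AB A1, integral_sub Ap (A0.const_mul (p m)),
      integral_const_mul, I1, integral_rexp_sq hc, hJ_def, sub_zero]
  have hAbs : |J - p m * (π / c) ^ ((d:ℝ)/2)|
      ≤ M / 2 * ((d : ℝ) / (2 * c) * (π / c) ^ ((d:ℝ)/2)) := by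
    rw [← hIsplit]
    have hInt : Integrable (fun w : EuclideanSpace ℝ (Fin d) =>
        rexp (-c * ‖w‖ ^ 2) * (p (m + w) - p m - L w)) := by
      rw [hsplit]; exact (Ap.sub (A0.const_mul (p m))).sub A1
    calc |∫ w : EuclideanSpace ℝ (Fin d), rexp (-c * ‖w‖ ^ 2) * (p (m + w) - p m - L w)|
        ≤ ∫ w : EuclideanSpace ℝ (Fin d), |rexp (-c * ‖w‖ ^ 2) * (p (m + w) - p m - L w)| :=
        by
          have hx := norm_integral_le_integral_norm (μ := volume)
            (fun w : EuclideanSpace ℝ (Fin d) => rexp (-c * ‖w‖ ^ 2) * (p (m + w) - p m - L w))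
          simpa only [Real.norm_eq_abs] using hx
      _ ≤ ∫ w : EuclideanSpace ℝ (Fin d), M / 2 * (‖w‖ ^ 2 * rexp (-c * ‖w‖ ^ 2)) := by
          apply integral_mono hInt.abs (A2.const_mul _)
          intro w
          have he : 0 < rexp (-c * ‖w‖ ^ 2) := Real.exp_pos _
          show |rexp (-c * ‖w‖ ^ 2) * (p (m + w) - p m - L w)|
            ≤ M / 2 * (‖w‖ ^ 2 * rexp (-c * ‖w‖ ^ 2))
          rw [abs_mul, abs_of_pos he]
          calc rexp (-c * ‖w‖ ^ 2) * |p (m + w) - p m - L w|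
              ≤ rexp (-c * ‖w‖ ^ 2) * (M / 2 * ‖w‖ ^ 2) :=
                mul_le_mul_of_nonneg_left (htay w) he.le
            _ = M / 2 * (‖w‖ ^ 2 * rexp (-c * ‖w‖ ^ 2)) := by ring
      _ = M / 2 * ((d : ℝ) / (2 * c) * (π / c) ^ ((d:ℝ)/2)) := by
          rw [integral_const_mul, normsq_exp_integral hc]
  -- reduce the main integral
  have hmain : (∫ z, gaussK d s x z * gaussK d t z y * p z) = K * (C * J) := by
    rw [show (fun z => gaussK d s x z * gaussK d t z y * p z)
        = fun z => K * (gaussK d u z m * p z) from funext hprod, integral_const_mul]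
    congr 1
    rw [← MeasureTheory.integral_add_left_eq_self (μ := volume)
      (fun z => gaussK d u z m * p z) m]
    simp_rw [hgK, mul_assoc, integral_const_mul]
    rfl
  rw [hmain, ← hstab, ← hK_def]
  have hCπ : C * ((π / c) ^ ((d:ℝ)/2)) = 1 := hCnorm
  have hfinal : |C * J - p m| ≤ (d : ℝ) * M / 2 * u := by
    have h1 : C * J - p m = C * (J - p m * (π / c) ^ ((d:ℝ)/2)) := by
      rw [mul_sub, ← mul_assoc, mul_comm C (p m), mul_assoc, hCπ, mul_one]
    rw [h1, abs_mul, abs_of_pos hC0]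
    calc C * |J - p m * (π / c) ^ ((d:ℝ)/2)|
        ≤ C * (M / 2 * ((d : ℝ) / (2 * c) * (π / c) ^ ((d:ℝ)/2))) :=
          mul_le_mul_of_nonneg_left hAbs hC0.le
      _ = M / 2 * ((d : ℝ) / (2 * c)) * (C * (π / c) ^ ((d:ℝ)/2)) := by ring
      _ = (d : ℝ) * M / 2 * u := by rw [hCπ, hdu]; ring
  calc |K * (C * J) - K * p m| = K * |C * J - p m| := by
        rw [← mul_sub, abs_mul, abs_of_pos hKpos]
    _ ≤ K * ((d : ℝ) * M / 2 * u) := mul_le_mul_of_nonneg_left hfinal hKpos.le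
    _ = K * ((d : ℝ) * M / 2) * u := by ring
end

section
/- Let d ≥ 1, let p_A and p_{A^c} be bounded continuous probability density functions on ℝ^d, let α_A ∈ (0,1), α_{A^c} = 1 − α_A, and p = α_A p_A + α_{A^c} p_{A^c}. Assume the overlap region ∂A = {x ∈ ℝ^d : p_A(x) p_{A^c}(x) > 0} is nonempty. Then lim_{m→∞} ( ∫_{ℝ^d} p_A(x) p_{A^c}(x) p(x)^{m−1} dx )^{1/m} = sup_{x ∈ ∂A} p(x). -/
open Real MeasureTheory Filter

lemma aux_tendsto (t c : ℝ) (ht : 0 < t) (hc : 0 < c) :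
    Tendsto (fun m : ℕ => t ^ ((((m-1:ℕ)):ℝ) * (1/(m:ℝ))) * c ^ (1/(m:ℝ))) atTop (nhds t) := by
  have h0 : Tendsto (fun m : ℕ => 1/(m:ℝ)) atTop (nhds 0) := tendsto_one_div_atTop_nhds_zero_nat
  have he : Tendsto (fun m : ℕ => (((m-1:ℕ)):ℝ) * (1/(m:ℝ))) atTop (nhds 1) := by
    have h1 : Tendsto (fun m : ℕ => 1 - 1/(m:ℝ)) atTop (nhds 1) := by
      simpa using tendsto_const_nhds.sub h0
    refine h1.congr' ?_
    filter_upwards [eventually_ge_atTop 1] with m hm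
    have hm0 : (m:ℝ) ≠ 0 := Nat.cast_ne_zero.2 (by omega)
    rw [Nat.cast_sub hm]
    field_simp
    simp
  have ht' : Tendsto (fun m : ℕ => t ^ ((((m-1:ℕ)):ℝ) * (1/(m:ℝ)))) atTop (nhds t) := by
    have := Filter.Tendsto.rpow (tendsto_const_nhds (x := t)) he (Or.inl ht.ne')
    simpa using this
  have hc' : Tendsto (fun m : ℕ => c ^ (1/(m:ℝ))) atTop (nhds 1) := by
    have := Filter.Tendsto.rpow (tendsto_const_nhds (x := c)) h0 (Or.inl hc.ne')
    simpa using this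
  simpa using ht'.mul hc'

/-- For bounded continuous densities `p_A, p_{A^c}` with mixture `p = α_A p_A + α_{A^c} p_{A^c}`
and nonempty overlap region `∂A = {x : p_A(x) p_{A^c}(x) > 0}`,
`lim_{m→∞} (∫ p_A p_{A^c} p^{m−1})^{1/m} = sup_{x ∈ ∂A} p(x)`. -/
theorem stmt10 (d : ℕ) (hd : 1 ≤ d)
    (pA pAc : EuclideanSpace ℝ (Fin d) → ℝ) (αA : ℝ) (hα : αA ∈ Set.Ioo (0 : ℝ) 1)
    (hpA0 : ∀ x, 0 ≤ pA x) (hpAc0 : ∀ x, 0 ≤ pAc x)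
    (hpAint : ∫ x, pA x = 1) (hpAcint : ∫ x, pAc x = 1)
    (hpAcont : Continuous pA) (hpAccont : Continuous pAc)
    (hpAbdd : ∃ M, ∀ x, pA x ≤ M) (hpAcbdd : ∃ M, ∀ x, pAc x ≤ M)
    (hne : ∃ x, 0 < pA x * pAc x) :
    Tendsto (fun m : ℕ =>
        (∫ x, pA x * pAc x * (αA * pA x + (1 - αA) * pAc x) ^ (m - 1)) ^ (1 / (m : ℝ)))
      atTop
      (nhds (sSup ((fun x => αA * pA x + (1 - αA) * pAc x) '' {x | 0 < pA x * pAc x}))) := by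
  obtain ⟨MA, hMA⟩ := hpAbdd
  obtain ⟨MAc, hMAc⟩ := hpAcbdd
  obtain ⟨hα0, hα1⟩ := hα
  set p : EuclideanSpace ℝ (Fin d) → ℝ := fun x => αA * pA x + (1 - αA) * pAc x with hpdef
  set f : EuclideanSpace ℝ (Fin d) → ℝ := fun x => pA x * pAc x with hfdef
  have hf0 : ∀ x, 0 ≤ f x := fun x => mul_nonneg (hpA0 x) (hpAc0 x)
  have hp0 : ∀ x, 0 ≤ p x := fun x => by
    have := hpA0 x; have := hpAc0 x; simp only [hpdef]; nlinarith
  have hpcont : Continuous p := by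
    apply ((continuous_const.mul hpAcont).add (continuous_const.mul hpAccont))
  have hfcont : Continuous f := hpAcont.mul hpAccont
  set Mp : ℝ := αA * MA + (1 - αA) * MAc with hMpdef
  have hpM : ∀ x, p x ≤ Mp := fun x => by
    have := hMA x; have := hMAc x; simp only [hpdef, hMpdef]; nlinarith
  -- integrability of pAc
  have hpAcinteg : Integrable pAc := by
    by_contra h
    rw [integral_undef h] at hpAcint; norm_num at hpAcint
  have hMA0 : 0 ≤ MA := le_trans (hpA0 hne.choose) (hMA _)
  have hf_int : Integrable f := by
    refine Integrable.mono' (hpAcinteg.const_mul MA) hfcont.aestronglyMeasurable ?_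
    filter_upwards with x
    rw [Real.norm_eq_abs, abs_of_nonneg (hf0 x)]
    exact mul_le_mul_of_nonneg_right (hMA x) (hpAc0 x)
  have hMp0 : 0 ≤ Mp := le_trans (hp0 hne.choose) (hpM _)
  have hint : ∀ n : ℕ, Integrable (fun x => f x * p x ^ n) := by
    intro n
    refine Integrable.mono' (hf_int.const_mul (Mp ^ n))
      (hfcont.mul (hpcont.pow n)).aestronglyMeasurable ?_
    filter_upwards with x
    rw [Real.norm_eq_abs, abs_of_nonneg (mul_nonneg (hf0 x) (pow_nonneg (hp0 x) n))]
    calc f x * p x ^ n ≤ f x * Mp ^ n :=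
          mul_le_mul_of_nonneg_left (pow_le_pow_left₀ (hp0 x) (hpM x) n) (hf0 x)
      _ = Mp ^ n * f x := mul_comm _ _
  set Int : ℕ → ℝ := fun n => ∫ x, f x * p x ^ n with hIntdef
  have hI0 : ∀ n, 0 ≤ Int n := fun n =>
    integral_nonneg fun x => mul_nonneg (hf0 x) (pow_nonneg (hp0 x) n)
  -- the sup
  set U : Set (EuclideanSpace ℝ (Fin d)) := {x | 0 < pA x * pAc x} with hUdef
  set S : ℝ := sSup (p '' U) with hSdef
  have hbdd : BddAbove (p '' U) := ⟨Mp, by rintro _ ⟨x, -, rfl⟩; exact hpM x⟩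
  have hSx : ∀ x ∈ U, p x ≤ S := fun x hx => le_csSup hbdd (Set.mem_image_of_mem _ hx)
  have hppos : ∀ x ∈ U, 0 < p x := by
    intro x hx
    have hx' : 0 < pA x * pAc x := hx
    have h1 : 0 < pA x := by nlinarith [hpA0 x, hpAc0 x]
    have := hpAc0 x
    simp only [hpdef]; nlinarith
  obtain ⟨x1, hx1⟩ := hne
  have hx1U : x1 ∈ U := hx1
  have hSpos : 0 < S := lt_of_lt_of_le (hppos x1 hx1U) (hSx x1 hx1U)
  -- C = ∫ f > 0
  set C : ℝ := ∫ x, f x with hCdef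
  have hC : 0 < C := by
    rw [hCdef, integral_pos_iff_support_of_nonneg hf0 hf_int]
    have hopen : IsOpen U := isOpen_lt continuous_const hfcont
    have hsub : U ⊆ Function.support f := fun x hx => ne_of_gt hx
    exact lt_of_lt_of_le (hopen.measure_pos volume ⟨x1, hx1U⟩) (measure_mono hsub)
  -- upper bound on Int n
  have hI_le : ∀ n, Int n ≤ S ^ n * C := by
    intro n
    have hpt : ∀ x, f x * p x ^ n ≤ S ^ n * f x := by
      intro x
      by_cases hx : x ∈ U
      · calc f x * p x ^ n ≤ f x * S ^ n :=
              mul_le_mul_of_nonneg_left (pow_le_pow_left₀ (hp0 x) (hSx x hx) n) (hf0 x)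
          _ = S ^ n * f x := mul_comm _ _
      · have hfx : f x = 0 := le_antisymm (not_lt.1 hx) (hf0 x)
        simp [hfx]
    calc Int n ≤ ∫ x, S ^ n * f x := integral_mono (hint n) (hf_int.const_mul _) hpt
      _ = S ^ n * C := by rw [integral_const_mul]
  -- main goal
  show Tendsto (fun m : ℕ => (Int (m - 1)) ^ (1 / (m : ℝ))) atTop (nhds S)
  rw [tendsto_order]
  constructor
  · -- lower: ∀ b < S, eventually b < a m
    intro b hb
    by_cases hb0 : b < 0
    · filter_upwards with m
      exact lt_of_lt_of_le hb0 (Real.rpow_nonneg (hI0 _) _)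
    push_neg at hb0
    obtain ⟨y, hy, hby⟩ := exists_lt_of_lt_csSup (Set.Nonempty.image p ⟨x1, hx1U⟩) hb
    obtain ⟨x0, hx0U, rfl⟩ := hy
    obtain ⟨β, hβb, hβp⟩ : ∃ β, b < β ∧ β < p x0 := exists_between hby
    have hβ0 : 0 < β := lt_of_le_of_lt hb0 hβb
    have hfx0 : 0 < f x0 := hx0U
    have hV : IsOpen ({x | β < p x} ∩ {x | f x0 / 2 < f x}) :=
      (isOpen_lt continuous_const hpcont).inter (isOpen_lt continuous_const hfcont)
    have hx0V : x0 ∈ {x | β < p x} ∩ {x | f x0 / 2 < f x} := ⟨hβp, by simp; linarith⟩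
    obtain ⟨r, hr, hball⟩ := Metric.isOpen_iff.1 hV x0 hx0V
    set vol : ℝ := (volume (Metric.ball x0 r)).toReal with hvoldef
    have hvol : 0 < vol :=
      ENNReal.toReal_pos (Metric.measure_ball_pos volume x0 hr).ne'
        (measure_ball_lt_top).ne
    set c : ℝ := f x0 / 2 * vol with hcdef
    have hc : 0 < c := mul_pos (by linarith) hvol
    have hlow : ∀ n, β ^ n * c ≤ Int n := by
      intro n
      have h1 : ∀ x ∈ Metric.ball x0 r, f x0 / 2 * β ^ n ≤ f x * p x ^ n := by
        intro x hx
        obtain ⟨hxp, hxf⟩ := hball hx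
        exact mul_le_mul hxf.le (pow_le_pow_left₀ hβ0.le hxp.le n)
          (pow_nonneg hβ0.le n) (hf0 x)
      have h2 : f x0 / 2 * β ^ n * vol ≤ ∫ x in Metric.ball x0 r, f x * p x ^ n :=
        setIntegral_ge_of_const_le_real measurableSet_ball (measure_ball_lt_top).ne h1
          (hint n).integrableOn
      have h3 : ∫ x in Metric.ball x0 r, f x * p x ^ n ≤ Int n :=
        setIntegral_le_integral (hint n)
          (Filter.Eventually.of_forall fun x => mul_nonneg (hf0 x) (pow_nonneg (hp0 x) n))
      calc β ^ n * c = f x0 / 2 * β ^ n * vol := by rw [hcdef]; ring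
        _ ≤ _ := h2
        _ ≤ Int n := h3
    have hL := aux_tendsto β c hβ0 hc
    filter_upwards [hL.eventually_const_lt hβb, eventually_ge_atTop 1] with m hm hm1
    refine lt_of_lt_of_le hm ?_
    calc β ^ ((((m-1:ℕ)):ℝ) * (1/(m:ℝ))) * c ^ (1/(m:ℝ))
        = (β ^ (m - 1) * c) ^ (1/(m:ℝ)) := by
          rw [Real.mul_rpow (pow_nonneg hβ0.le _) hc.le, ← Real.rpow_natCast β (m-1),
            ← Real.rpow_mul hβ0.le]
      _ ≤ (Int (m - 1)) ^ (1/(m:ℝ)) :=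
          Real.rpow_le_rpow (mul_nonneg (pow_nonneg hβ0.le _) hc.le) (hlow (m-1))
            (by positivity)
  · -- upper: ∀ b > S, eventually a m < b
    intro b hb
    have hUt := aux_tendsto S C hSpos hC
    filter_upwards [hUt.eventually_lt_const hb, eventually_ge_atTop 1] with m hm hm1
    refine lt_of_le_of_lt ?_ hm
    calc (Int (m - 1)) ^ (1/(m:ℝ))
        ≤ (S ^ (m - 1) * C) ^ (1/(m:ℝ)) :=
          Real.rpow_le_rpow (hI0 _) (hI_le (m-1)) (by positivity)
      _ = S ^ ((((m-1:ℕ)):ℝ) * (1/(m:ℝ))) * C ^ (1/(m:ℝ)) := by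
          rw [Real.mul_rpow (pow_nonneg hSpos.le _) hC.le, ← Real.rpow_natCast S (m-1),
            ← Real.rpow_mul hSpos.le]
end

section
/- Let d ≥ 1, σ > 0 and R > 0 with R² ≥ d σ². Then the Gaussian tail satisfies ∫_{{z ∈ ℝ^d : ‖z‖ > R}} (2πσ²)^{−d/2} exp(−‖z‖²/(2σ²)) dz ≤ (R²/(d σ²))^{d/2} · exp(−R²/(2σ²) + d/2). -/
open Real MeasureTheory

lemma integrable_rexp_neg_mul_sq_norm' {d : ℕ} {b : ℝ} (hb : 0 < b) :
    Integrable (fun v : EuclideanSpace ℝ (Fin d) => Real.exp (-b * ‖v‖ ^ 2)) := by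
  have h := (GaussianFourier.integrable_cexp_neg_mul_sq_norm_add
    (V := EuclideanSpace ℝ (Fin d)) (b := (b : ℂ)) (by simpa using hb) 0 0).re
  convert h using 2 with v
  rw [show (-(b : ℂ) * (‖v‖ : ℂ) ^ 2 + 0 * ((inner ℝ (0 : EuclideanSpace ℝ (Fin d)) v : ℝ) : ℂ))
      = ((-b * ‖v‖ ^ 2 : ℝ) : ℂ) by push_cast; ring, ← Complex.ofReal_exp]
  simp [Complex.ofReal_re]
  rw [show (-((b:ℂ) * (‖v‖:ℂ) ^ 2)) = ((-(b * ‖v‖ ^ 2) : ℝ) : ℂ) by push_cast; ring,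
    ← Complex.ofReal_exp, Complex.ofReal_re]

/-- Gaussian tail bound: for `R² ≥ dσ²`,
`∫_{‖z‖>R} (2πσ²)^{−d/2} e^{−‖z‖²/(2σ²)} dz ≤ (R²/(dσ²))^{d/2} e^{−R²/(2σ²) + d/2}`. -/
theorem stmt15 (d : ℕ) (hd : 1 ≤ d) (σ R : ℝ) (hσ : 0 < σ) (hR : 0 < R)
    (h : (d : ℝ) * σ ^ 2 ≤ R ^ 2) :
    (∫ z in {z : EuclideanSpace ℝ (Fin d) | R < ‖z‖},
        (2 * Real.pi * σ ^ 2) ^ (-(d : ℝ) / 2) * Real.exp (-‖z‖ ^ 2 / (2 * σ ^ 2))) ≤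
      (R ^ 2 / ((d : ℝ) * σ ^ 2)) ^ ((d : ℝ) / 2) *
        Real.exp (-R ^ 2 / (2 * σ ^ 2) + (d : ℝ) / 2) := by
  have hd0 : (0:ℝ) < d := by exact_mod_cast hd
  set a : ℝ := (d : ℝ) / (2 * R ^ 2) with ha_def
  have ha : 0 < a := by positivity
  set s : ℝ := 1 / (2 * σ ^ 2) - a with hs_def
  have hs : 0 ≤ s := by
    have h1 : a ≤ 1 / (2 * σ ^ 2) := by
      rw [ha_def, div_le_div_iff₀ (by positivity) (by positivity)]
      nlinarith
    rw [hs_def]; linarith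
  set c : ℝ := (2 * Real.pi * σ ^ 2) ^ (-(d : ℝ) / 2) with hc_def
  have hc : 0 < c := by
    apply Real.rpow_pos_of_pos; positivity
  set g : EuclideanSpace ℝ (Fin d) → ℝ :=
    fun z => (Real.exp (-(s * R ^ 2)) * c) * Real.exp (-a * ‖z‖ ^ 2) with hg_def
  have hfg : ∀ z : EuclideanSpace ℝ (Fin d), R ≤ ‖z‖ →
      c * Real.exp (-‖z‖ ^ 2 / (2 * σ ^ 2)) ≤ g z := by
    intro z hz
    have : c * Real.exp (-‖z‖ ^ 2 / (2 * σ ^ 2)) =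
        (Real.exp (-(s * R ^ 2)) * c) * Real.exp (-a * ‖z‖ ^ 2) *
          Real.exp (s * (R ^ 2 - ‖z‖ ^ 2)) := by
      rw [mul_assoc, mul_comm (Real.exp _), mul_assoc, ← Real.exp_add, ← Real.exp_add]
      congr 2
      rw [hs_def]
      field_simp [hs_def]
      ring
    rw [this]
    have hle : Real.exp (s * (R ^ 2 - ‖z‖ ^ 2)) ≤ 1 := by
      rw [Real.exp_le_one_iff]
      have : ‖z‖ ^ 2 ≥ R ^ 2 := by nlinarith [norm_nonneg z]
      nlinarith
    show _ ≤ Real.exp (-(s * R ^ 2)) * c * Real.exp (-a * ‖z‖ ^ 2)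
    exact mul_le_of_le_one_right (by positivity) hle
  have hgint : Integrable g := (integrable_rexp_neg_mul_sq_norm' ha).const_mul _
  have hfint : Integrable (fun z : EuclideanSpace ℝ (Fin d) =>
      c * Real.exp (-‖z‖ ^ 2 / (2 * σ ^ 2))) := by
    have : ∀ z : EuclideanSpace ℝ (Fin d),
        Real.exp (-‖z‖ ^ 2 / (2 * σ ^ 2)) = Real.exp (-(1 / (2 * σ ^ 2)) * ‖z‖ ^ 2) := by
      intro z; congr 1; field_simp
    simp_rw [this]
    exact (integrable_rexp_neg_mul_sq_norm' (by positivity)).const_mul _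
  set S : Set (EuclideanSpace ℝ (Fin d)) := {z | R < ‖z‖} with hS_def
  have hSmeas : MeasurableSet S := by
    apply measurableSet_lt measurable_const (continuous_norm.measurable)
  have step1 : (∫ z in S, c * Real.exp (-‖z‖ ^ 2 / (2 * σ ^ 2))) ≤ ∫ z in S, g z := by
    apply setIntegral_mono_on hfint.integrableOn hgint.integrableOn hSmeas
    intro z hz
    exact hfg z (le_of_lt hz)
  have step2 : (∫ z in S, g z) ≤ ∫ z, g z := by
    apply setIntegral_le_integral hgint
    filter_upwards with z
    positivity
  have step3 : (∫ z : EuclideanSpace ℝ (Fin d), g z) =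
      (Real.exp (-(s * R ^ 2)) * c) * (Real.pi / a) ^ ((d : ℝ) / 2) := by
    rw [hg_def, integral_const_mul, GaussianFourier.integral_rexp_neg_mul_sq_norm ha]
    congr 1
    simp [finrank_euclideanSpace, Fintype.card_fin]
  have key : (Real.exp (-(s * R ^ 2)) * c) * (Real.pi / a) ^ ((d : ℝ) / 2) =
      (R ^ 2 / ((d : ℝ) * σ ^ 2)) ^ ((d : ℝ) / 2) *
        Real.exp (-R ^ 2 / (2 * σ ^ 2) + (d : ℝ) / 2) := by
    have h1 : c * (Real.pi / a) ^ ((d : ℝ) / 2) =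
        (R ^ 2 / ((d : ℝ) * σ ^ 2)) ^ ((d : ℝ) / 2) := by
      rw [hc_def, neg_div, Real.rpow_neg (by positivity), ← Real.inv_rpow (by positivity),
        ← Real.mul_rpow (by positivity) (by positivity)]
      congr 1
      rw [ha_def]
      field_simp
    have h2 : Real.exp (-(s * R ^ 2)) = Real.exp (-R ^ 2 / (2 * σ ^ 2) + (d : ℝ) / 2) := by
      congr 1
      rw [hs_def, ha_def]
      field_simp
      ring
    calc (Real.exp (-(s * R ^ 2)) * c) * (Real.pi / a) ^ ((d : ℝ) / 2)
        = Real.exp (-(s * R ^ 2)) * (c * (Real.pi / a) ^ ((d : ℝ) / 2)) := by ring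
      _ = _ := by rw [h1, h2]; ring
  calc (∫ z in S, c * Real.exp (-‖z‖ ^ 2 / (2 * σ ^ 2))) ≤ ∫ z, g z := step1.trans step2
    _ = _ := step3.trans key
end
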